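/- Hindsight advantage formulation: for any fixed goal g', ∇η(θ) = Σ_τ p(τ | g', θ) Σ_g p(g) Σ_{t=1}^{T−1} ∇ log p(a_t | s_t, g, θ) · [ ∏_{k=1}^t p(a_k | s_k, g, θ)/p(a_k | s_k, g', θ) ] · A_t^θ(s_t, a_t, g). -/

import Mathlib

open Finset

/-- A trajectory `s_1, a_1, …, s_T` with horizon `T = n + 1`. -/
abbrev Traj (S A : Type) (n : ℕ) := (Fin (n + 1) → S) × (Fin n → A)

/-- `p(τ ∣ g, θ) = p(s_1) ∏_{t=1}^{T-1} p(a_t ∣ s_t, g, θ) p(s_{t+1} ∣ s_t, a_t)`. -/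
def trajProb {S A G : Type} (n : ℕ) (init : S → ℝ) (trans : S → A → S → ℝ)
    (pol : ℝ → G → S → A → ℝ) (θ : ℝ) (g : G) (τ : Traj S A n) : ℝ :=
  init (τ.1 0) * ∏ t : Fin n,
    pol θ g (τ.1 t.castSucc) (τ.2 t) * trans (τ.1 t.castSucc) (τ.2 t) (τ.1 t.succ)

/-- The expected return `η(θ) = ∑_g p(g) ∑_τ p(τ ∣ g, θ) ∑_{t=1}^T r(s_t, g)`. -/
def expReturn {S A G : Type} [Fintype S] [Fintype A] [Fintype G] (n : ℕ)
    (init : S → ℝ) (trans : S → A → S → ℝ) (pol : ℝ → G → S → A → ℝ)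
    (pG : G → ℝ) (r : S → G → ℝ) (θ : ℝ) : ℝ :=
  ∑ g : G, pG g * ∑ τ : Traj S A n,
    trajProb n init trans pol θ g τ * ∑ t : Fin (n + 1), r (τ.1 t) g

/-- The action-value function
`Q_t^θ(s, a, g) = E[∑_{t'=t+1}^T r(S_{t'}, g) ∣ S_t = s, A_t = a, g, θ]`,
defined as a conditional expectation under the trajectory distribution. -/
noncomputable def condQ {S A G : Type} [Fintype S] [Fintype A] [DecidableEq S] [DecidableEq A]
    (n : ℕ) (init : S → ℝ) (trans : S → A → S → ℝ) (pol : ℝ → G → S → A → ℝ)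
    (r : S → G → ℝ) (θ : ℝ) (g : G) (t : Fin n) (s : S) (a : A) : ℝ :=
  (∑ τ : Traj S A n,
      if τ.1 t.castSucc = s ∧ τ.2 t = a then
        trajProb n init trans pol θ g τ *
          ∑ t' ∈ Finset.univ.filter (fun t' : Fin (n + 1) => t.castSucc < t'), r (τ.1 t') g
      else 0) /
    (∑ τ : Traj S A n,
      if τ.1 t.castSucc = s ∧ τ.2 t = a then trajProb n init trans pol θ g τ else 0)

/-!
By the product rule, `∇ p(τ ∣ g, θ)` is the sum over steps `t` of the weights of `τ` under the
kernel that follows `pol θ g` except at step `t`, where it follows `∇ pol θ g`. That kernel has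
zero row sums at step `t` and is stochastic afterwards, so summing it against any function of
the trajectory up to `s_t` gives zero: this removes the rewards collected up to time `t` and the
baseline `V_t(s_t)`. Since the kernel differs from `pol θ g` only through a factor depending on
`(s_t, a_t)`, the rewards after `t` may be replaced by their conditional mean `Q_t(s_t, a_t)`.
The resulting advantage depends only on the trajectory up to `a_t`, so the kernel may follow
`pol θ g'` after step `t`; its weight is `p(τ ∣ g', θ)` times the importance ratios up to `t`
times `∇ log pol`.
-/

lemma sum_deriv_eq_zero_of_sum_const {ι : Type*} [Fintype ι] (f : ℝ → ι → ℝ) (θ c : ℝ)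
    (hf : ∀ i, DifferentiableAt ℝ (f · i) θ) (hsum : ∀ θ, ∑ i, f θ i = c) :
    ∑ i, deriv (f · i) θ = 0 := by
  have hderiv := HasDerivAt.fun_sum (u := univ) fun i _ => (hf i).hasDerivAt
  simp only [hsum] at hderiv
  exact hderiv.unique (hasDerivAt_const θ c)

lemma Fin.sum_univ_eq_sum_castLE_add_sum_filter_lt {M : Type*} [AddCommMonoid M] {n : ℕ}
    (f : Fin n → M) (i : Fin n) :
    ∑ j, f j = ∑ j : Fin (i + 1), f (Fin.castLE i.isLt j) + ∑ j with i < j, f j := by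
  rw [← sum_filter_not_add_sum_filter univ (i < ·)]
  congr 1
  calc ∑ j with ¬i < j, f j = ∑ j ≤ (Fin.last i).castLE i.isLt, f j := by
        simp only [not_lt, Finset.filter_ge_eq_Iic]
        rfl
    _ = _ := by rw [Fin.sum_Iic_castLE, ← Finset.Iic_top, Fin.top_eq_last]

section CondMean

variable {ι κ : Type*} [Fintype ι] [DecidableEq κ]

noncomputable def condMean (p : ι → ℝ) (key : ι → κ) (f : ι → ℝ) (c : κ) : ℝ :=
  (∑ i with key i = c, p i * f i) / ∑ i with key i = c, p i

lemma sum_mul_condMean (p : ι → ℝ) (hp : ∀ i, 0 < p i) (key : ι → κ) (h : κ → ℝ)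
    (f : ι → ℝ) :
    ∑ i, p i * h (key i) * condMean p key f (key i) = ∑ i, p i * h (key i) * f i := by
  have hkey : ∀ i ∈ (univ : Finset ι), key i ∈ univ.image key :=
    fun i _ => mem_image_of_mem key (mem_univ i)
  rw [← sum_fiberwise_of_maps_to hkey, ← sum_fiberwise_of_maps_to hkey]
  refine sum_congr rfl fun c hc => ?_
  obtain ⟨i₀, -, rfl⟩ := mem_image.1 hc
  have hD : 0 < ∑ i with key i = key i₀, p i := sum_pos (fun i _ => hp i) ⟨i₀, by simp⟩
  calc ∑ i with key i = key i₀, p i * h (key i) * condMean p key f (key i)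
      = (∑ i with key i = key i₀, p i) * h (key i₀) * condMean p key f (key i₀) := by
        rw [sum_mul, sum_mul]
        exact sum_congr rfl fun i hi => by rw [(mem_filter.1 hi).2]
    _ = h (key i₀) * ∑ i with key i = key i₀, p i * f i := by
        rw [condMean]
        field_simp
    _ = ∑ i with key i = key i₀, p i * h (key i) * f i := by
        rw [mul_sum]
        exact sum_congr rfl fun i hi => by rw [(mem_filter.1 hi).2]; ring

end CondMean

namespace Traj

variable {S A : Type}

def take {m n : ℕ} (h : m ≤ n) (τ : Traj S A n) : Traj S A m :=
  (fun i => τ.1 (Fin.castLE (Nat.succ_le_succ h) i), fun j => τ.2 (Fin.castLE h j))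

def snocEquiv (n : ℕ) : Traj S A n × (A × S) ≃ Traj S A (n + 1) where
  toFun x := (Fin.snoc x.1.1 x.2.2, Fin.snoc x.1.2 x.2.1)
  invFun τ := ((Fin.init τ.1, Fin.init τ.2), (τ.2 (Fin.last n), τ.1 (Fin.last (n + 1))))
  left_inv x := by simp
  right_inv τ := by simp

lemma take_snocEquiv {n : ℕ} (τ : Traj S A n) (x : A × S) :
    take n.le_succ (snocEquiv n (τ, x)) = τ :=
  Prod.ext (funext fun _ => Fin.snoc_castSucc (α := fun _ => S) ..)
    (funext fun _ => Fin.snoc_castSucc (α := fun _ => A) ..)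

end Traj

section Weight

variable {S A : Type} (init : S → ℝ) (trans : S → A → S → ℝ)

def trajWeight {n : ℕ} (P : Fin n → S → A → ℝ) (τ : Traj S A n) : ℝ :=
  init (τ.1 0) * ∏ t, P t (τ.1 t.castSucc) (τ.2 t) * trans (τ.1 t.castSucc) (τ.2 t) (τ.1 t.succ)

lemma trajWeight_snocEquiv {n : ℕ} (P : Fin (n + 1) → S → A → ℝ) (τ : Traj S A n)
    (a : A) (s : S) :
    trajWeight init trans P (Traj.snocEquiv n (τ, (a, s))) =
      trajWeight init trans (fun k => P k.castSucc) τ *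
        (P (Fin.last n) (τ.1 (Fin.last n)) a * trans (τ.1 (Fin.last n)) a s) := by
  obtain ⟨σ, α⟩ := τ
  simp [trajWeight, Traj.snocEquiv, Fin.prod_univ_castSucc, mul_assoc, Fin.succ_castSucc,
    -Fin.castSucc_succ]

lemma trajWeight_update {n : ℕ} (P : Fin n → S → A → ℝ) (t : Fin n) (q : S → A → ℝ)
    (τ : Traj S A n) :
    trajWeight init trans (Function.update P t q) τ =
      init (τ.1 0) * (∏ k ∈ univ.erase t,
          P k (τ.1 k.castSucc) (τ.2 k) * trans (τ.1 k.castSucc) (τ.2 k) (τ.1 k.succ)) *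
        (q (τ.1 t.castSucc) (τ.2 t) * trans (τ.1 t.castSucc) (τ.2 t) (τ.1 t.succ)) := by
  rw [trajWeight, ← prod_erase_mul univ _ (mem_univ t), Function.update_self, ← mul_assoc]
  congr 2
  exact prod_congr rfl fun k hk => by rw [Function.update_of_ne (ne_of_mem_erase hk)]

lemma trajWeight_update_mul {n : ℕ} (P : Fin n → S → A → ℝ) (t : Fin n) (q : S → A → ℝ)
    (τ : Traj S A n) :
    trajWeight init trans (Function.update P t q) τ * P t (τ.1 t.castSucc) (τ.2 t) =
      trajWeight init trans P τ * q (τ.1 t.castSucc) (τ.2 t) := by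
  have hP := trajWeight_update init trans P t (P t) τ
  rw [Function.update_eq_self] at hP
  rw [trajWeight_update, hP]
  ring

lemma hasDerivAt_trajWeight {n : ℕ} (P : ℝ → Fin n → S → A → ℝ) (P' : Fin n → S → A → ℝ)
    (θ : ℝ) (hP : ∀ t s a, HasDerivAt (fun θ' => P θ' t s a) (P' t s a) θ) (τ : Traj S A n) :
    HasDerivAt (fun θ' => trajWeight init trans (P θ') τ)
      (∑ t, trajWeight init trans (Function.update (P θ) t (P' t)) τ) θ := by
  have hprod := (HasDerivAt.fun_finsetProd (u := univ) fun t _ =>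
    (hP t (τ.1 t.castSucc) (τ.2 t)).mul_const (trans (τ.1 t.castSucc) (τ.2 t) (τ.1 t.succ)))
  refine (hprod.const_mul (init (τ.1 0))).congr_deriv ?_
  simp only [trajWeight_update, mul_sum, smul_eq_mul, mul_assoc]

lemma trajWeight_pos (hinit : ∀ s, 0 < init s) (htrans : ∀ s a s', 0 < trans s a s') {n : ℕ}
    {P : Fin n → S → A → ℝ} (hP : ∀ k s a, 0 < P k s a) (τ : Traj S A n) :
    0 < trajWeight init trans P τ :=
  mul_pos (hinit _) (prod_pos fun _ _ => mul_pos (hP ..) (htrans ..))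

end Weight

section Marginal

variable {S A : Type} [Fintype S] [Fintype A] (init : S → ℝ) {trans : S → A → S → ℝ}
  (htrans : ∀ s a, ∑ s', trans s a s' = 1)
include htrans

lemma sum_trajWeight_succ_mul_take {n : ℕ} (P : Fin (n + 1) → S → A → ℝ)
    (f : Traj S A n → ℝ) :
    ∑ τ, trajWeight init trans P τ * f (Traj.take n.le_succ τ) =
      ∑ τ, trajWeight init trans (fun k => P k.castSucc) τ * f τ *
        ∑ a, P (Fin.last n) (τ.1 (Fin.last n)) a := by
  rw [← (Traj.snocEquiv n).sum_comp, Fintype.sum_prod_type]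
  refine sum_congr rfl fun τ _ => ?_
  simp only [Fintype.sum_prod_type, trajWeight_snocEquiv, Traj.take_snocEquiv, mul_sum]
  refine sum_congr rfl fun a _ => ?_
  simp only [← sum_mul, ← mul_sum, htrans]
  ring

lemma sum_trajWeight_mul_take {m n : ℕ} (h : m ≤ n) (P : Fin n → S → A → ℝ)
    (hP : ∀ k : Fin n, m ≤ k → ∀ s, ∑ a, P k s a = 1) (f : Traj S A m → ℝ) :
    ∑ τ, trajWeight init trans P τ * f (Traj.take h τ) =
      ∑ τ, trajWeight init trans (fun k => P (Fin.castLE h k)) τ * f τ := by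
  induction n, h using Nat.le_induction with
  | base => rfl
  | succ n hmn ih =>
    have hlast (τ : Traj S A n) : ∑ a, P (Fin.last n) (τ.1 (Fin.last n)) a = 1 :=
      hP _ (by simpa using hmn) _
    calc _ = ∑ τ, trajWeight init trans P τ * f (Traj.take hmn (Traj.take n.le_succ τ)) := rfl
      _ = ∑ τ, trajWeight init trans (fun k => P k.castSucc) τ * f (Traj.take hmn τ) := by
        rw [sum_trajWeight_succ_mul_take init htrans P (fun τ => f (Traj.take hmn τ))]
        simp only [hlast, mul_one]
      _ = _ := ih (fun k => P k.castSucc) (fun k hk => hP _ hk)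

lemma sum_trajWeight_mul_take_eq_zero {n : ℕ} (P : Fin n → S → A → ℝ) (t : Fin n)
    (ht : ∀ s, ∑ a, P t s a = 0) (hP : ∀ k : Fin n, t < k → ∀ s, ∑ a, P k s a = 1)
    (f : Traj S A t → ℝ) :
    ∑ τ, trajWeight init trans P τ * f (Traj.take t.isLt.le τ) = 0 :=
  calc _ = ∑ τ, trajWeight init trans P τ * f (Traj.take (t : ℕ).le_succ (Traj.take t.isLt τ)) :=
        rfl
    _ = ∑ τ, trajWeight init trans (fun k => P (Fin.castLE t.isLt k)) τ *
          f (Traj.take (t : ℕ).le_succ τ) :=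
        sum_trajWeight_mul_take init htrans t.isLt P (fun k hk => hP k (by omega))
          (fun τ => f (Traj.take (t : ℕ).le_succ τ))
    _ = 0 := by
        rw [sum_trajWeight_succ_mul_take init htrans]
        exact sum_eq_zero fun τ _ => mul_eq_zero_of_right _ (ht _)

lemma sum_trajWeight_mul_take_congr {m n : ℕ} (h : m ≤ n) {P Q : Fin n → S → A → ℝ}
    (hPQ : ∀ k : Fin n, (k : ℕ) < m → P k = Q k)
    (hP : ∀ k : Fin n, m ≤ k → ∀ s, ∑ a, P k s a = 1)
    (hQ : ∀ k : Fin n, m ≤ k → ∀ s, ∑ a, Q k s a = 1) (f : Traj S A m → ℝ) :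
    ∑ τ, trajWeight init trans P τ * f (Traj.take h τ) =
      ∑ τ, trajWeight init trans Q τ * f (Traj.take h τ) := by
  rw [sum_trajWeight_mul_take init htrans h P hP, sum_trajWeight_mul_take init htrans h Q hQ]
  have hPQ' : (fun k => P (Fin.castLE h k)) = fun k => Q (Fin.castLE h k) :=
    funext fun k => hPQ _ k.isLt
  rw [hPQ']

end Marginal

section Policy

variable {S A G : Type} {n : ℕ} (init : S → ℝ) (trans : S → A → S → ℝ)
  (pol : ℝ → G → S → A → ℝ)

noncomputable def polDeriv (θ : ℝ) (g : G) (s : S) (a : A) : ℝ :=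
  deriv (fun θ' => pol θ' g s a) θ

noncomputable def derivKernel (θ : ℝ) (g : G) (t : Fin n) : Fin n → S → A → ℝ :=
  Function.update (fun _ => pol θ g) t (polDeriv pol θ g)

noncomputable def hindsightKernel (θ : ℝ) (g g' : G) (t : Fin n) : Fin n → S → A → ℝ :=
  Function.update (fun k => if k ≤ t then pol θ g else pol θ g') t (polDeriv pol θ g)

lemma trajProb_mul_prod_ratio (θ : ℝ) (g g' : G) (t : Fin n) (τ : Traj S A n)
    (hpol : ∀ s a, 0 < pol θ g' s a) :
    trajProb n init trans pol θ g' τ *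
        ∏ k : Fin n, (if k ≤ t then
          pol θ g (τ.1 k.castSucc) (τ.2 k) / pol θ g' (τ.1 k.castSucc) (τ.2 k) else 1) =
      trajWeight init trans (fun k => if k ≤ t then pol θ g else pol θ g') τ := by
  rw [trajProb, trajWeight, mul_assoc, ← prod_mul_distrib]
  congr 1
  refine prod_congr rfl fun k _ => ?_
  have hne := (hpol (τ.1 k.castSucc) (τ.2 k)).ne'
  split_ifs <;> field_simp

lemma trajWeight_hindsightKernel {θ : ℝ} (hpol : ∀ g s a, 0 < pol θ g s a)
    (hpold : ∀ g s a, DifferentiableAt ℝ (fun θ' => pol θ' g s a) θ) (g g' : G) (t : Fin n)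
    (τ : Traj S A n) :
    trajWeight init trans (hindsightKernel pol θ g g' t) τ =
      trajProb n init trans pol θ g' τ *
        (deriv (fun θ' => Real.log (pol θ' g (τ.1 t.castSucc) (τ.2 t))) θ *
          ∏ k : Fin n, (if k ≤ t then
            pol θ g (τ.1 k.castSucc) (τ.2 k) / pol θ g' (τ.1 k.castSucc) (τ.2 k) else 1)) := by
  have hpos := (hpol g (τ.1 t.castSucc) (τ.2 t)).ne'
  have hlog := ((hpold g (τ.1 t.castSucc) (τ.2 t)).hasDerivAt.log hpos).deriv
  have hupd := trajWeight_update_mul init trans (fun k => if k ≤ t then pol θ g else pol θ g') t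
    (polDeriv pol θ g) τ
  simp only [le_refl, if_true] at hupd
  rw [hlog, mul_left_comm, trajProb_mul_prod_ratio init trans pol θ g g' t τ (hpol g'),
    hindsightKernel, div_mul_eq_mul_div, eq_div_iff hpos, hupd, polDeriv, mul_comm]

end Policy

lemma hasDerivAt_expReturn {S A G : Type} [Fintype S] [Fintype A] [Fintype G] {n : ℕ}
    (init : S → ℝ) (trans : S → A → S → ℝ) (pol : ℝ → G → S → A → ℝ) (pG : G → ℝ)
    (r : S → G → ℝ) (θ : ℝ) (hpold : ∀ g s a, DifferentiableAt ℝ (fun θ' => pol θ' g s a) θ) :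
    HasDerivAt (expReturn n init trans pol pG r)
      (∑ g, pG g * ∑ t : Fin n, ∑ τ,
        trajWeight init trans (derivKernel pol θ g t) τ * ∑ t', r (τ.1 t') g) θ := by
  have hweight (g : G) (τ : Traj S A n) :=
    hasDerivAt_trajWeight init trans (fun θ' _ => pol θ' g) (fun _ => polDeriv pol θ g) θ
      (fun _ s a => (hpold g s a).hasDerivAt) τ
  have hderiv := HasDerivAt.fun_sum (u := univ) fun g _ =>
    (HasDerivAt.fun_sum (u := univ) fun τ _ =>
      (hweight g τ).mul_const (∑ t', r (τ.1 t') g)).const_mul (pG g)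
  refine hderiv.congr_deriv (sum_congr rfl fun g _ => ?_)
  simp only [sum_mul]
  rw [sum_comm]
  rfl

section Advantage

variable {S A G : Type} [Fintype S] [Fintype A] [DecidableEq S] [DecidableEq A] {n : ℕ}
  (init : S → ℝ) (trans : S → A → S → ℝ) (pol : ℝ → G → S → A → ℝ) (r : S → G → ℝ)

noncomputable def advantage (θ : ℝ) (g : G) (t : Fin n) (s : S) (a : A) : ℝ :=
  condQ n init trans pol r θ g t s a - ∑ b, pol θ g s b * condQ n init trans pol r θ g t s b

lemma condQ_eq_condMean (θ : ℝ) (g : G) (t : Fin n) (s : S) (a : A) :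
    condQ n init trans pol r θ g t s a =
      condMean (trajProb n init trans pol θ g) (fun τ => (τ.1 t.castSucc, τ.2 t))
        (fun τ => ∑ t' with t.castSucc < t', r (τ.1 t') g) (s, a) := by
  simp only [condQ, condMean, sum_filter, Prod.mk.injEq]

variable {init trans pol} {θ : ℝ}

lemma sum_trajWeight_derivKernel_mul_futureReturn (hinit : ∀ s, 0 < init s)
    (htrans : ∀ s a s', 0 < trans s a s') (hpol : ∀ g s a, 0 < pol θ g s a) (g : G)
    (t : Fin n) :
    ∑ τ, trajWeight init trans (derivKernel pol θ g t) τ *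
        ∑ t' with t.castSucc < t', r (τ.1 t') g =
      ∑ τ, trajWeight init trans (derivKernel pol θ g t) τ *
        condQ n init trans pol r θ g t (τ.1 t.castSucc) (τ.2 t) := by
  have hweight (τ : Traj S A n) : trajWeight init trans (derivKernel pol θ g t) τ =
      trajProb n init trans pol θ g τ *
        (polDeriv pol θ g (τ.1 t.castSucc) (τ.2 t) / pol θ g (τ.1 t.castSucc) (τ.2 t)) := by
    rw [mul_div_assoc', eq_div_iff (hpol ..).ne']
    exact trajWeight_update_mul init trans _ t _ τ
  simp only [hweight, condQ_eq_condMean]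
  exact (sum_mul_condMean _ (trajWeight_pos init trans hinit htrans fun _ => hpol g)
    (fun τ => (τ.1 t.castSucc, τ.2 t)) (fun x => polDeriv pol θ g x.1 x.2 / pol θ g x.1 x.2)
    _).symm

lemma sum_trajWeight_derivKernel_mul_return (hinit : ∀ s, 0 < init s)
    (htrans : ∀ s a s', 0 < trans s a s') (htrans1 : ∀ s a, ∑ s', trans s a s' = 1)
    (hpol : ∀ g s a, 0 < pol θ g s a)
    (hpold : ∀ g s a, DifferentiableAt ℝ (fun θ' => pol θ' g s a) θ)
    (hpol1 : ∀ θ' g s, ∑ a, pol θ' g s a = 1) (g g' : G) (t : Fin n) :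
    ∑ τ, trajWeight init trans (derivKernel pol θ g t) τ * ∑ t', r (τ.1 t') g =
      ∑ τ, trajWeight init trans (hindsightKernel pol θ g g' t) τ *
        advantage init trans pol r θ g t (τ.1 t.castSucc) (τ.2 t) := by
  set D := derivKernel pol θ g t
  have hD0 (s : S) : ∑ a, D t s a = 0 := by
    simp only [D, derivKernel, Function.update_self, polDeriv]
    exact sum_deriv_eq_zero_of_sum_const (fun θ a => pol θ g s a) θ 1 (fun a => hpold g s a)
      (fun θ => hpol1 θ g s)
  have hD1 (k : Fin n) (hk : t < k) (s : S) : ∑ a, D k s a = 1 := by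
    simp only [D, derivKernel, Function.update_of_ne hk.ne']
    exact hpol1 θ g s
  have hM1 (k : Fin n) (hk : t < k) (s : S) :
      ∑ a, hindsightKernel pol θ g g' t k s a = 1 := by
    rw [hindsightKernel, Function.update_of_ne hk.ne', if_neg (not_le.2 hk)]
    exact hpol1 θ g' s
  have hDM (k : Fin n) (hk : (k : ℕ) < t + 1) : D k = hindsightKernel pol θ g g' t k := by
    have hkt : k ≤ t := Fin.le_def.2 (Nat.lt_succ_iff.1 hk)
    simp only [D, derivKernel, hindsightKernel, Function.update_apply, if_pos hkt]
  calc ∑ τ, trajWeight init trans D τ * ∑ t', r (τ.1 t') g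
      = ∑ τ, trajWeight init trans D τ * ∑ j, r ((Traj.take t.isLt.le τ).1 j) g +
          ∑ τ, trajWeight init trans D τ * ∑ t' with t.castSucc < t', r (τ.1 t') g := by
        simp only [Fin.sum_univ_eq_sum_castLE_add_sum_filter_lt _ t.castSucc, mul_add,
          sum_add_distrib]
        rfl
    _ = ∑ τ, trajWeight init trans D τ *
          condQ n init trans pol r θ g t (τ.1 t.castSucc) (τ.2 t) := by
        rw [sum_trajWeight_mul_take_eq_zero init htrans1 D t hD0 hD1 fun τ => ∑ j, r (τ.1 j) g,
          zero_add, sum_trajWeight_derivKernel_mul_futureReturn r hinit htrans hpol]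
    _ = ∑ τ, trajWeight init trans D τ *
          condQ n init trans pol r θ g t (τ.1 t.castSucc) (τ.2 t) -
        ∑ τ, trajWeight init trans D τ *
          ∑ b, pol θ g ((Traj.take t.isLt.le τ).1 (Fin.last t)) b *
            condQ n init trans pol r θ g t ((Traj.take t.isLt.le τ).1 (Fin.last t)) b := by
        rw [sum_trajWeight_mul_take_eq_zero init htrans1 D t hD0 hD1 fun τ =>
          ∑ b, pol θ g (τ.1 (Fin.last t)) b * condQ n init trans pol r θ g t (τ.1 (Fin.last t)) b,
          sub_zero]
    _ = ∑ τ, trajWeight init trans D τ *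
          advantage init trans pol r θ g t (τ.1 t.castSucc) (τ.2 t) := by
        simp only [advantage, mul_sub, sum_sub_distrib]
        rfl
    _ = _ :=
        sum_trajWeight_mul_take_congr init htrans1 t.isLt hDM
          (fun k hk => hD1 k (Fin.lt_def.2 hk)) (fun k hk => hM1 k (Fin.lt_def.2 hk))
          fun τ => advantage init trans pol r θ g t (τ.1 (Fin.last t).castSucc) (τ.2 (Fin.last t))

end Advantage

theorem hindsight_policy_gradient_advantage_general {S A G : Type}
    [Fintype S] [Fintype A] [Fintype G] [DecidableEq S] [DecidableEq A]
    (n : ℕ) (init : S → ℝ) (trans : S → A → S → ℝ) (pol : ℝ → G → S → A → ℝ)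
    (pG : G → ℝ) (r : S → G → ℝ)
    (hinit : ∀ s, 0 < init s)
    (htrans : ∀ s a s', 0 < trans s a s') (htrans1 : ∀ s a, ∑ s' : S, trans s a s' = 1)
    (hpol : ∀ (θ' : ℝ) (g : G) (s : S) (a : A), 0 < pol θ' g s a)
    (hpold : ∀ (g : G) (s : S) (a : A), Differentiable ℝ fun θ' => pol θ' g s a)
    (hpol1 : ∀ (θ' : ℝ) (g : G) (s : S), ∑ a : A, pol θ' g s a = 1)
    (θ : ℝ) (g' : G) :
    deriv (expReturn n init trans pol pG r) θ =
      ∑ τ : Traj S A n, trajProb n init trans pol θ g' τ *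
        ∑ g : G, pG g * ∑ t : Fin n,
          deriv (fun θ'' => Real.log (pol θ'' g (τ.1 t.castSucc) (τ.2 t))) θ *
            ((∏ k : Fin n,
                if k ≤ t then
                  pol θ g (τ.1 k.castSucc) (τ.2 k) / pol θ g' (τ.1 k.castSucc) (τ.2 k)
                else 1) *
              (condQ n init trans pol r θ g t (τ.1 t.castSucc) (τ.2 t) -
                ∑ a : A, pol θ g (τ.1 t.castSucc) a *
                  condQ n init trans pol r θ g t (τ.1 t.castSucc) a)) := by
  have hpoldθ (g : G) (s : S) (a : A) : DifferentiableAt ℝ (fun θ' => pol θ' g s a) θ :=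
    hpold g s a θ
  rw [(hasDerivAt_expReturn init trans pol pG r θ hpoldθ).deriv]
  calc ∑ g, pG g * ∑ t : Fin n, ∑ τ,
        trajWeight init trans (derivKernel pol θ g t) τ * ∑ t', r (τ.1 t') g
      = ∑ g, pG g * ∑ t : Fin n, ∑ τ : Traj S A n,
          trajWeight init trans (hindsightKernel pol θ g g' t) τ *
          advantage init trans pol r θ g t (τ.1 t.castSucc) (τ.2 t) := by
        simp only [sum_trajWeight_derivKernel_mul_return r hinit htrans htrans1 (hpol θ) hpoldθ
          hpol1 _ g']
    _ = _ := by
        simp only [trajWeight_hindsightKernel init trans pol (hpol θ) hpoldθ, advantage, mul_sum]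
        conv_rhs => rw [sum_comm]; arg 2; ext g; rw [sum_comm]
        simp only [mul_assoc, mul_left_comm (pG _)]

/-- the advantage formulation of the hindsight policy gradient. For any
fixed goal `g'`, `∇η(θ) = ∑_τ p(τ∣g',θ) ∑_g p(g) ∑_{t=1}^{T-1} ∇ log p(a_t∣s_t,g,θ)
[∏_{k=1}^{t} p(a_k∣s_k,g,θ)/p(a_k∣s_k,g',θ)] A_t^θ(s_t, a_t, g)`, where
`A_t^θ = Q_t^θ − V_t^θ` and `V_t^θ(s,g) = ∑_a p(a∣s,g,θ) Q_t^θ(s,a,g)`. -/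
theorem hindsight_policy_gradient_advantage {S A G : Type}
    [Fintype S] [Fintype A] [Fintype G] [DecidableEq S] [DecidableEq A]
    (n : ℕ) (init : S → ℝ) (trans : S → A → S → ℝ) (pol : ℝ → G → S → A → ℝ)
    (pG : G → ℝ) (r : S → G → ℝ)
    (hinit : ∀ s, 0 < init s) (hinit1 : ∑ s : S, init s = 1)
    (htrans : ∀ s a s', 0 < trans s a s') (htrans1 : ∀ s a, ∑ s' : S, trans s a s' = 1)
    (hpol : ∀ (θ' : ℝ) (g : G) (s : S) (a : A), 0 < pol θ' g s a)
    (hpold : ∀ (g : G) (s : S) (a : A), Differentiable ℝ fun θ' => pol θ' g s a)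
    (hpol1 : ∀ (θ' : ℝ) (g : G) (s : S), ∑ a : A, pol θ' g s a = 1)
    (hpG : ∀ g, 0 ≤ pG g) (hpG1 : ∑ g : G, pG g = 1)
    (θ : ℝ) (g' : G) :
    deriv (expReturn n init trans pol pG r) θ =
      ∑ τ : Traj S A n, trajProb n init trans pol θ g' τ *
        ∑ g : G, pG g * ∑ t : Fin n,
          deriv (fun θ'' => Real.log (pol θ'' g (τ.1 t.castSucc) (τ.2 t))) θ *
            ((∏ k : Fin n,
                if k ≤ t then
                  pol θ g (τ.1 k.castSucc) (τ.2 k) / pol θ g' (τ.1 k.castSucc) (τ.2 k)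
                else 1) *
              (condQ n init trans pol r θ g t (τ.1 t.castSucc) (τ.2 t) -
                ∑ a : A, pol θ g (τ.1 t.castSucc) a *
                  condQ n init trans pol r θ g t (τ.1 t.castSucc) a)) :=
  hindsight_policy_gradient_advantage_general n init trans pol pG r hinit htrans htrans1 hpol hpold
    hpol1 θ g'
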